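/- arXiv:2409.06911 — 2 statements merged into one kernel-verified Lean document; each statement's English description precedes it below -/
import Mathlib

section
/- Let V be a subspace of ℝ^q (as a vector space over ℝ) that is closed under entrywise (Hadamard) product and contains the all-ones vector. Then for every v ∈ V and every a ∈ ℝ, the indicator vector v^a defined by (v^a)_x = 1 if v_x = a and 0 otherwise also belongs to V. -/
/-!
`V` is a subalgebra of `ℝ^q`, hence contains every polynomial in `v`. Since `v` takes only
finitely many values, Lagrange interpolation realises any function of `v`, in particular the
indicator of the level set `{v = a}`, as such a polynomial.
-/

open Polynomial

theorem Polynomial.exists_eval_eq_on_finset {K : Type*} [Field K]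
    (s : Finset K) (f : K → K) : ∃ p : K[X], ∀ x ∈ s, p.eval x = f x := by
  classical
  exact ⟨Lagrange.interpolate s id f,
    fun _ hx => Lagrange.eval_interpolate_at_node f (Set.injOn_id _) hx⟩

theorem Subalgebra.comp_mem_of_finite {ι K : Type*} [Finite ι] [Field K]
    (S : Subalgebra K (ι → K)) {v : ι → K} (hv : v ∈ S) (f : K → K) : f ∘ v ∈ S := by
  classical
  have := Fintype.ofFinite ι
  obtain ⟨p, hp⟩ := exists_eval_eq_on_finset (Finset.univ.image v) f
  have hpv : aeval v p = f ∘ v := by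
    rw [aeval_pi_apply]
    funext x
    simpa using hp (v x) (by simp)
  exact hpv ▸ (Algebra.adjoin_le (Set.singleton_subset_iff.mpr hv))
    (aeval_mem_adjoin_singleton K v)

theorem stmt_0 (q : ℕ) (V : Submodule ℝ (Fin q → ℝ))
    (hmul : ∀ u ∈ V, ∀ v ∈ V, (fun x => u x * v x) ∈ V)
    (hone : (fun _ : Fin q => (1 : ℝ)) ∈ V)
    (v : Fin q → ℝ) (hv : v ∈ V) (a : ℝ) :
    (fun x => if v x = a then (1 : ℝ) else 0) ∈ V :=
  (V.toSubalgebra hone fun u w hu hw => hmul u hu w hw).comp_mem_of_finite hv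
    fun t => if t = a then 1 else 0
end

section
/- Let F : (Fin q)^n → ℝ be a symmetric tensor with n ≥ 3 and H ∈ O(q). Define (F*F) : (Fin q)^{2n-2} → ℝ by (F*F)(x,y) = Σ_{z} F(x,z) F(y,z) for x, y ∈ (Fin q)^{n-1}. If the transformed tensor H(F*F) is a generalized equality (i.e., vanishes off the diagonal: it is zero on any input tuple with two unequal coordinates), then HF is also a generalized equality. -/
/-! For `y` of length `n`, write `G_α(y)` for the slice `F(·, α)` transformed by `H` in each of its
`n` arguments. Expanding the contraction gives `(H(F * F))(y, y) = ∑ α, G_α(y)²`, while `(HF)(y, z)`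
is the `z`-th entry of `H` applied to the vector `α ↦ G_α(y)`, so orthogonality of `H` gives
`∑ z, (HF)(y, z)² = ∑ α, G_α(y)²` as well. If `x` has two unequal coordinates, symmetry of `HF` lets
us move them into the first `n` positions; with `y` those positions, `(y, y)` is off the diagonal,
so the sum of squares vanishes and `(HF)(x) = 0`. -/

open Matrix

/-- The action of a `q × q` matrix on an arity-`m` tensor. -/
def act (q m : ℕ) (H : Matrix (Fin q) (Fin q) ℝ) (T : (Fin m → Fin q) → ℝ) :
    (Fin m → Fin q) → ℝ :=
  fun i => ∑ j : Fin m → Fin q, (∏ k, H (i k) (j k)) * T j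

/-- The contraction `F * F` of an arity-`(n+1)` tensor along its last input,
viewed as an arity-`(n + n)` tensor. -/
def starSelf (q n : ℕ) (F : (Fin (n + 1) → Fin q) → ℝ) : (Fin (n + n) → Fin q) → ℝ :=
  fun w => ∑ z : Fin q,
    F (Fin.snoc (fun i => w (Fin.castAdd n i)) z) * F (Fin.snoc (fun i => w (Fin.natAdd n i)) z)

/-- A tensor is a generalized equality if it vanishes on any input with two unequal
coordinates. -/
def GenEq (q m : ℕ) (T : (Fin m → Fin q) → ℝ) : Prop :=
  ∀ x : Fin m → Fin q, (∃ i j, x i ≠ x j) → T x = 0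

section Action

variable {q : ℕ} (H : Matrix (Fin q) (Fin q) ℝ)

theorem act_comp_perm {m : ℕ} {T : (Fin m → Fin q) → ℝ} (σ : Equiv.Perm (Fin m))
    (hT : ∀ x, T (x ∘ σ) = T x) (x : Fin m → Fin q) :
    act q m H T (x ∘ σ) = act q m H T x := by
  unfold act
  rw [← (Equiv.arrowCongr σ.symm (Equiv.refl (Fin q))).sum_comp]
  refine Fintype.sum_congr _ _ fun j => ?_
  change (∏ k, H (x (σ k)) (j (σ k))) * T (j ∘ σ) = _
  rw [hT, Equiv.prod_comp σ fun k => H (x k) (j k)]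

theorem act_sum_mul {m : ℕ} {ι : Type*} (s : Finset ι) (c : ι → ℝ)
    (T : ι → (Fin m → Fin q) → ℝ) (x : Fin m → Fin q) :
    act q m H (fun j => ∑ z ∈ s, c z * T z j) x = ∑ z ∈ s, c z * act q m H (T z) x := by
  simp only [act, Finset.mul_sum]
  rw [Finset.sum_comm]
  exact Finset.sum_congr rfl fun z _ => Finset.sum_congr rfl fun j _ => by ring

theorem act_snoc {m : ℕ} (T : (Fin (m + 1) → Fin q) → ℝ) (x : Fin m → Fin q) (z : Fin q) :
    act q (m + 1) H T (Fin.snoc x z) =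
      (H *ᵥ fun α => act q m H (fun a => T (Fin.snoc a α)) x) z := by
  simp only [act, mulVec, dotProduct]
  rw [← (Fin.snocEquiv fun _ => Fin q).sum_comp, Fintype.sum_prod_type]
  simp only [Fin.snocEquiv_apply, Fin.prod_univ_castSucc, Fin.snoc_castSucc, Fin.snoc_last,
    mul_assoc, mul_left_comm, Finset.mul_sum]
  rfl

theorem act_append {m n : ℕ} (T : (Fin (m + n) → Fin q) → ℝ) (x : Fin m → Fin q)
    (y : Fin n → Fin q) :
    act q (m + n) H T (Fin.append x y) =
      act q m H (fun a => act q n H (fun b => T (Fin.append a b)) y) x := by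
  simp only [act]
  rw [← (Fin.appendEquiv m n).sum_comp, Fintype.sum_prod_type]
  simp only [Fin.appendEquiv_apply, Fin.prod_univ_add, Fin.append_left, Fin.append_right,
    mul_assoc, Finset.mul_sum]
  rfl

end Action

theorem sum_sq_mulVec_of_transpose_mul_self {q : ℕ} {H : Matrix (Fin q) (Fin q) ℝ}
    (hH : Hᵀ * H = 1) (v : Fin q → ℝ) : ∑ i, (H *ᵥ v) i ^ 2 = ∑ i, v i ^ 2 := by
  have : (H *ᵥ v) ⬝ᵥ (H *ᵥ v) = v ⬝ᵥ v := by
    rw [dotProduct_mulVec, ← mulVec_transpose, mulVec_mulVec, hH, one_mulVec, dotProduct_comm]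
  simpa [dotProduct, sq] using this

section Contraction

variable {q n : ℕ} (H : Matrix (Fin q) (Fin q) ℝ) (F : (Fin (n + 1) → Fin q) → ℝ)

theorem starSelf_append (a b : Fin n → Fin q) :
    starSelf q n F (Fin.append a b) = ∑ z, F (Fin.snoc a z) * F (Fin.snoc b z) := by
  simp only [starSelf, Fin.append_left, Fin.append_right]

theorem act_starSelf_append_self (y : Fin n → Fin q) :
    act q (n + n) H (starSelf q n F) (Fin.append y y) =
      ∑ z, act q n H (fun b => F (Fin.snoc b z)) y ^ 2 := by
  simp_rw [act_append, starSelf_append, act_sum_mul, mul_comm (F _), act_sum_mul, sq]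

theorem act_starSelf_append_self_eq_sum_sq (hH : Hᵀ * H = 1) (y : Fin n → Fin q) :
    act q (n + n) H (starSelf q n F) (Fin.append y y) =
      ∑ z, act q (n + 1) H F (Fin.snoc y z) ^ 2 := by
  simp_rw [act_starSelf_append_self, act_snoc, sum_sq_mulVec_of_transpose_mul_self hH]

end Contraction

theorem exists_perm_ne_castSucc {α : Type*} {n : ℕ} (hn : 2 ≤ n) {x : Fin (n + 1) → α}
    {i j : Fin (n + 1)} (hij : x i ≠ x j) :
    ∃ σ : Equiv.Perm (Fin (n + 1)), ∃ i' j' : Fin n, x (σ i'.castSucc) ≠ x (σ j'.castSucc) := by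
  obtain ⟨k, -, hk⟩ : ∃ k ∈ Finset.univ, k ∉ ({i, j} : Finset (Fin (n + 1))) :=
    Finset.exists_mem_notMem_of_card_lt_card <| by
      grw [Finset.card_le_two]
      simp only [Finset.card_univ, Fintype.card_fin]
      omega
  -- swapping a third position `k` with the last one moves `i` and `j` off the last position
  set σ := Equiv.swap k (Fin.last n)
  have hσ : ∀ l, l ≠ k → σ l ≠ Fin.last n := fun l hl h =>
    hl (by simpa [σ, Equiv.swap_apply_eq_iff] using h)
  simp only [Finset.mem_insert, Finset.mem_singleton, not_or] at hk
  refine ⟨σ, (σ i).castPred (hσ i (Ne.symm hk.1)), (σ j).castPred (hσ j (Ne.symm hk.2)), ?_⟩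
  simpa [σ] using hij

theorem stmt_14 (q n : ℕ) (hn : 2 ≤ n) (F : (Fin (n + 1) → Fin q) → ℝ)
    (hsymm : ∀ σ : Equiv.Perm (Fin (n + 1)), ∀ x, F (x ∘ σ) = F x)
    (H : Matrix (Fin q) (Fin q) ℝ) (hH : Hᵀ * H = 1)
    (hgen : GenEq q (n + n) (act q (n + n) H (starSelf q n F))) :
    GenEq q (n + 1) (act q (n + 1) H F) := by
  rintro x ⟨i, j, hij⟩
  obtain ⟨σ, i', j', hσ⟩ := exists_perm_ne_castSucc hn hij
  set y : Fin n → Fin q := Fin.init (x ∘ σ)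
  have hy : x ∘ σ = Fin.snoc y (x (σ (Fin.last n))) := (Fin.snoc_init_self _).symm
  have hsq : ∑ z, act q (n + 1) H F (Fin.snoc y z) ^ 2 = 0 := by
    rw [← act_starSelf_append_self_eq_sum_sq H F hH]
    exact hgen _ ⟨Fin.castAdd n i', Fin.castAdd n j', by simpa [y, Fin.init] using hσ⟩
  rw [← act_comp_perm H σ (hsymm σ), hy]
  exact pow_eq_zero_iff two_ne_zero |>.mp <|
    (Finset.sum_eq_zero_iff_of_nonneg fun z _ => sq_nonneg _).mp hsq _ (Finset.mem_univ _)
end
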